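/- If the isolation distance satisfies dist(λ_n, spec(K)\{λ_n}) ≥ 2√δ with δ ∈ (0, 1/4) and ‖K − K^δ‖ ≤ δ, then the spectral projections satisfy ‖P_n − P_n^δ‖ ≤ 2√δ. -/

import Mathlib

/-!
On the circle `|z - μ| = √δ` the isolation hypothesis keeps `z` at distance at least `√δ` from
the spectrum of `K`, so, `K` being normal, `‖(z - K)⁻¹‖ ≤ 1/√δ`. A Neumann series then gives
`‖(z - Kδ)⁻¹‖ ≤ 1/(√δ - δ)`, and the second resolvent identity bounds the difference of the two
resolvents by `δ / (√δ (√δ - δ))`. Averaging over the circle yields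
`‖P - Pδ‖ ≤ δ / (√δ - δ) = √δ / (1 - √δ)`, which is at most `2√δ` because `√δ < 1/2`.
-/

open scoped Real
open Metric

theorem le_dist_of_mem_sphere_of_le_infDist {X : Type*} [PseudoMetricSpace X] {s : Set X}
    {c z w : X} {R : ℝ} (hs : 2 * R ≤ infDist c (s \ {c})) (hz : z ∈ sphere c R) (hw : w ∈ s) :
    R ≤ dist z w := by
  rw [mem_sphere] at hz
  by_cases hwc : w = c
  · rw [hwc, hz]
  · have := hs.trans (infDist_le_dist_of_mem ⟨hw, hwc⟩)
    linarith [dist_triangle c z w, dist_comm c z]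

theorem isUnit_and_norm_inverse_le_of_norm_sub_le {A : Type*} [NormedRing A] [NormOneClass A]
    [CompleteSpace A] {a b : A} {r δ : ℝ} (ha : IsUnit a) (ha' : ‖Ring.inverse a‖ ≤ r⁻¹)
    (hab : ‖a - b‖ ≤ δ) (hδr : δ < r) :
    IsUnit b ∧ ‖Ring.inverse b‖ ≤ (r - δ)⁻¹ := by
  have hr : 0 < r := (norm_nonneg _).trans hab |>.trans_lt hδr
  set t := Ring.inverse a * (a - b)
  have ht : ‖t‖ ≤ r⁻¹ * δ :=
    (norm_mul_le _ _).trans (mul_le_mul ha' hab (norm_nonneg _) (by positivity))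
  have hq : r⁻¹ * δ < 1 := by rwa [inv_mul_lt_one₀ hr]
  have ht1 : ‖t‖ < 1 := ht.trans_lt hq
  have hb : b = a * (1 - t) := by
    rw [mul_sub, mul_one, ← mul_assoc, Ring.mul_inverse_cancel a ha, one_mul, sub_sub_cancel]
  have hinv : ‖Ring.inverse (1 - t)‖ ≤ (1 - ‖t‖)⁻¹ := by
    simpa [← geom_series_eq_inverse t ht1] using tsum_geometric_le_of_norm_lt_one t ht1
  refine ⟨hb ▸ ha.mul (isUnit_one_sub_of_norm_lt_one ht1), ?_⟩
  calc ‖Ring.inverse b‖ = ‖Ring.inverse (1 - t) * Ring.inverse a‖ := by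
        rw [hb, Ring.inverse_mul (.inl ha)]
    _ ≤ (1 - r⁻¹ * δ)⁻¹ * r⁻¹ := by
        refine (norm_mul_le _ _).trans (mul_le_mul ?_ ha' (norm_nonneg _) ?_)
        · exact hinv.trans (inv_anti₀ (by linarith) (by linarith))
        · exact inv_nonneg.2 (by linarith)
    _ = (r - δ)⁻¹ := by
        field_simp

theorem IsStarNormal.norm_resolvent_le {A : Type*} [CStarAlgebra A] {a : A} [IsStarNormal a]
    {z : ℂ} {r : ℝ} (hr : 0 < r) (h : ∀ w ∈ spectrum ℂ a, r ≤ dist z w) :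
    ‖resolvent a z‖ ≤ r⁻¹ := by
  have hne : ∀ w ∈ spectrum ℂ a, z - w ≠ 0 := fun w hw hzw => by
    have := h w hw
    rw [dist_eq_norm, hzw, norm_zero] at this
    linarith
  have hcfc : resolvent a z = cfc (fun w => (z - w)⁻¹) a := by
    rw [cfc_inv (fun w => z - w) a hne, cfc_sub (fun _ => z) (fun w => w) a, cfc_const z a,
      cfc_id' ℂ a]
    rfl
  rw [hcfc]
  refine norm_cfc_le (by positivity) fun w hw => ?_
  rw [norm_inv, ← dist_eq_norm]
  exact inv_anti₀ hr (h w hw)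

section Resolvent

variable {𝕜 A : Type*} [NontriviallyNormedField 𝕜] [NormedRing A] [NormedAlgebra 𝕜 A]
  {a b : A} {z : 𝕜}

theorem mem_resolventSet_and_norm_resolvent_le_of_norm_sub_le [NormOneClass A] [CompleteSpace A]
    {r δ : ℝ} (hz : z ∈ resolventSet 𝕜 a) (ha : ‖resolvent a z‖ ≤ r⁻¹) (hab : ‖a - b‖ ≤ δ)
    (hδr : δ < r) :
    z ∈ resolventSet 𝕜 b ∧ ‖resolvent b z‖ ≤ (r - δ)⁻¹ :=
  isUnit_and_norm_inverse_le_of_norm_sub_le hz ha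
    (by rwa [sub_sub_sub_cancel_left, norm_sub_rev]) hδr

theorem norm_resolvent_sub_resolvent_le {p q δ : ℝ} (hza : z ∈ resolventSet 𝕜 a)
    (hzb : z ∈ resolventSet 𝕜 b) (ha : ‖resolvent a z‖ ≤ p) (hb : ‖resolvent b z‖ ≤ q)
    (hab : ‖a - b‖ ≤ δ) :
    ‖resolvent a z - resolvent b z‖ ≤ p * δ * q := by
  have hp : 0 ≤ p := (norm_nonneg _).trans ha
  have hδ : 0 ≤ δ := (norm_nonneg _).trans hab
  rw [spectrum.resolvent_sub_resolvent hza hzb]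
  exact norm_mul₃_le.trans (by gcongr)

theorem continuousOn_resolvent [CompleteSpace A] (a : A) :
    ContinuousOn (resolvent a) (resolventSet 𝕜 a) :=
  fun _ hz => (spectrum.hasDerivAt_resolvent_const_left hz).continuousAt.continuousWithinAt

end Resolvent

noncomputable def rieszProjection {A : Type*} [NormedRing A] [NormedAlgebra ℂ A]
    [CompleteSpace A] (a : A) (c : ℂ) (R : ℝ) : A :=
  (2 * π * Complex.I : ℂ)⁻¹ • ∮ z in C(c, R), resolvent a z

theorem norm_rieszProjection_sub_le {A : Type*} [NormedRing A] [NormOneClass A]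
    [NormedAlgebra ℂ A] [CompleteSpace A] {a b : A} {c : ℂ} {R r δ : ℝ} (hR : 0 ≤ R)
    (hres : ∀ z ∈ sphere c R, z ∈ resolventSet ℂ a ∧ ‖resolvent a z‖ ≤ r⁻¹)
    (hab : ‖a - b‖ ≤ δ) (hδr : δ < r) :
    ‖rieszProjection a c R - rieszProjection b c R‖ ≤ R * (r⁻¹ * δ * (r - δ)⁻¹) := by
  have hresb (z) (hz : z ∈ sphere c R) :=
    mem_resolventSet_and_norm_resolvent_le_of_norm_sub_le (hres z hz).1 (hres z hz).2 hab hδr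
  have hint {x : A} (hx : ∀ z ∈ sphere c R, z ∈ resolventSet ℂ x) :
      CircleIntegrable (resolvent x) c R :=
    ((continuousOn_resolvent x).mono hx).circleIntegrable hR
  rw [rieszProjection, rieszProjection, ← smul_sub,
    ← circleIntegral.integral_sub (hint fun z hz => (hres z hz).1)
      (hint fun z hz => (hresb z hz).1)]
  exact circleIntegral.norm_two_pi_i_inv_smul_integral_le_of_norm_le_const hR fun z hz =>
    norm_resolvent_sub_resolvent_le (hres z hz).1 (hresb z hz).1 (hres z hz).2 (hresb z hz).2 hab

theorem stmt3_general {X : Type*} [NormedAddCommGroup X] [InnerProductSpace ℂ X] [CompleteSpace X]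
    (K Kδ : X →L[ℂ] X)
    (hK : IsSelfAdjoint K)
    (μ δ : ℝ) (hδ : δ ∈ Set.Ioo (0 : ℝ) (1 / 4))
    (hiso : 2 * Real.sqrt δ ≤ Metric.infDist (μ : ℂ) (spectrum ℂ K \ {(μ : ℂ)}))
    (hnorm : ‖K - Kδ‖ ≤ δ) :
    ‖((2 * π * Complex.I : ℂ)⁻¹ •
        (∮ z in C((μ : ℂ), Real.sqrt δ), Ring.inverse (z • (1 : X →L[ℂ] X) - K))) -
      ((2 * π * Complex.I : ℂ)⁻¹ •
        (∮ z in C((μ : ℂ), Real.sqrt δ), Ring.inverse (z • (1 : X →L[ℂ] X) - Kδ)))‖ ≤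
      2 * Real.sqrt δ := by
  -- `X →L[ℂ] X` is a `NormOneClass` only for nontrivial `X`
  nontriviality X
  obtain ⟨hδ0, hδ4⟩ := hδ
  set R := Real.sqrt δ
  have hR0 : 0 < R := Real.sqrt_pos.2 hδ0
  have hRR : R * R = δ := Real.mul_self_sqrt hδ0.le
  have hR2 : R < 1 / 2 := (Real.sqrt_lt' one_half_pos).2 (by norm_num [hδ4])
  have := hK.isStarNormal
  have hres (z) (hz : z ∈ sphere (μ : ℂ) R) :
      z ∈ resolventSet ℂ K ∧ ‖resolvent K z‖ ≤ R⁻¹ := by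
    have hdist (w) (hw : w ∈ spectrum ℂ K) := le_dist_of_mem_sphere_of_le_infDist hiso hz hw
    refine ⟨spectrum.mem_resolventSet_iff.2 <| spectrum.notMem_iff.1 fun hzK => ?_,
      IsStarNormal.norm_resolvent_le hR0 hdist⟩
    simpa [hR0.not_ge] using hdist z hzK
  have hdiff := norm_rieszProjection_sub_le hR0.le hres hnorm (by nlinarith)
  simp only [← Algebra.algebraMap_eq_smul_one]
  calc _ = ‖rieszProjection K μ R - rieszProjection Kδ μ R‖ := rfl
    _ ≤ R * (R⁻¹ * δ * (R - δ)⁻¹) := hdiff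
    _ ≤ 2 * R := by
      rw [← hRR]
      field_simp
      rw [div_le_iff₀ (by linarith)]
      linarith

/-- If the isolation distance of the eigenvalue `λ_n` of `K` satisfies
`dist(λ_n, spec(K)\{λ_n}) ≥ 2√δ` with `δ ∈ (0,1/4)` and `‖K - K^δ‖ ≤ δ`, then the Riesz
spectral projections over the circle of radius `√δ` around `λ_n` satisfy
`‖P_n - P_n^δ‖ ≤ 2√δ`. -/
theorem stmt3 {X : Type*} [NormedAddCommGroup X] [InnerProductSpace ℂ X] [CompleteSpace X]
    (K Kδ : X →L[ℂ] X)
    (hK : IsSelfAdjoint K) (hKδ : IsSelfAdjoint Kδ)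
    (hKc : IsCompactOperator ⇑K) (hKδc : IsCompactOperator ⇑Kδ)
    (μ δ : ℝ) (hδ : δ ∈ Set.Ioo (0 : ℝ) (1 / 4))
    (hμ : (μ : ℂ) ∈ spectrum ℂ K)
    (hiso : 2 * Real.sqrt δ ≤ Metric.infDist (μ : ℂ) (spectrum ℂ K \ {(μ : ℂ)}))
    (hnorm : ‖K - Kδ‖ ≤ δ) :
    ‖((2 * π * Complex.I : ℂ)⁻¹ •
        (∮ z in C((μ : ℂ), Real.sqrt δ), Ring.inverse (z • (1 : X →L[ℂ] X) - K))) -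
      ((2 * π * Complex.I : ℂ)⁻¹ •
        (∮ z in C((μ : ℂ), Real.sqrt δ), Ring.inverse (z • (1 : X →L[ℂ] X) - Kδ)))‖ ≤
      2 * Real.sqrt δ :=
  stmt3_general K Kδ hK μ δ hδ hiso hnorm
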